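/- For every pair of integers n, j with n ≥ 3 and 1 ≤ j ≤ n−2, and with N = C(n,2), one has (e^{−2}/(2·√(n(n−1))))·(n^{1−j/n}·κ(j/n))^n ≤ C(N, n−j) ≤ (n^{1−j/n}·κ(j/n))^n. -/

import Mathlib

noncomputable def kappa (x : ℝ) : ℝ := (Real.exp 1 / 2) ^ (1 - x) * (1 - x) ^ (-(1 - x))

/-! With `k = n - j` the bound reads `(e n² / (2k))^k`. Upper bound: `C(N, k) ≤ N^k / k!`,
`k^k / k! ≤ e^k` (one term of the exponential series) and `N ≤ n² / 2`.
Lower bound: `N - i ≥ N e^{-i/(N-i)}` gives `N(N-1)⋯(N-k+1) ≥ N^k e^{-1}` because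
`k(k-1)/2 ≤ N - k + 1`, and the monotonicity of Stirling's sequence gives `k! ≤ e √k (k/e)^k`.
Comparing `n² / 2` with `N` costs `(n/(n-1))^k ≤ e`, and `e √k ≤ 2 √(n(n-1))`. -/

open Real Nat

lemma kappa_pow_eq {n j : ℕ} (hjn : j < n) :
    ((n : ℝ) ^ (1 - (j : ℝ) / n) * kappa ((j : ℝ) / n)) ^ n =
      (exp 1 * n ^ 2 / (2 * (n - j : ℕ))) ^ (n - j) := by
  set k := n - j
  have hn : (0 : ℝ) < n := by exact_mod_cast (zero_le j).trans_lt hjn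
  have hk : (0 : ℝ) < k := by simp [k, hjn]
  have ht : 1 - (j : ℝ) / n = k / n := by
    rw [Nat.cast_sub hjn.le]; field_simp
  have hbase : (n : ℝ) ^ ((k : ℝ) / n) * kappa (j / n) =
      (exp 1 * n ^ 2 / (2 * k)) ^ ((k : ℝ) / n) := by
    rw [kappa, ht, rpow_neg (by positivity), ← inv_rpow (by positivity),
      ← mul_rpow (by positivity) (by positivity), ← mul_rpow (by positivity) (by positivity)]
    congr 1
    field_simp
  rw [ht, hbase, ← rpow_natCast, ← rpow_mul (by positivity), div_mul_cancel₀ _ hn.ne',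
    rpow_natCast]

lemma factorial_le_exp_one_mul_sqrt_mul_pow {k : ℕ} (hk : k ≠ 0) :
    (k ! : ℝ) ≤ exp 1 * √k * (k / exp 1) ^ k := by
  obtain ⟨m, rfl⟩ : ∃ m, k = m + 1 := ⟨k - 1, by omega⟩
  have h : Stirling.stirlingSeq (m + 1) ≤ exp 1 / √2 :=
    Stirling.stirlingSeq_one ▸ Stirling.stirlingSeq'_antitone (zero_le m)
  rw [Stirling.stirlingSeq, div_le_div_iff₀ (by positivity) (by positivity),
    sqrt_mul zero_le_two] at h
  have h2 : (0 : ℝ) < √2 := by positivity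
  nlinarith

lemma choose_le_exp_one_mul_div_pow (N k : ℕ) : (N.choose k : ℝ) ≤ (exp 1 * N / k) ^ k := by
  have hk : (0 : ℝ) < (k : ℝ) ^ k := by
    rcases k.eq_zero_or_pos with rfl | hk
    · simp
    · positivity
  calc (N.choose k : ℝ) ≤ (N : ℝ) ^ k / k ! := choose_le_pow_div k N
    _ = (k : ℝ) ^ k / k ! * N ^ k / (k : ℝ) ^ k := by field_simp
    _ ≤ exp k * N ^ k / (k : ℝ) ^ k := by gcongr; exact pow_div_factorial_le_exp _ k.cast_nonneg k
    _ = (exp 1 * N / k) ^ k := by rw [div_pow, mul_pow, ← exp_one_pow]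

lemma mul_exp_neg_div_sub_le {x N : ℝ} (h : x < N) : N * exp (-(x / (N - x))) ≤ N - x := by
  have hNx : 0 < N - x := sub_pos.mpr h
  have hexp : (1 + x / (N - x)) * exp (-(x / (N - x))) ≤ 1 := by
    calc (1 + x / (N - x)) * exp (-(x / (N - x)))
        ≤ exp (x / (N - x)) * exp (-(x / (N - x))) := by
          gcongr; linarith [add_one_le_exp (x / (N - x))]
      _ = 1 := by rw [← exp_add, add_neg_cancel, exp_zero]
  calc N * exp (-(x / (N - x))) = (N - x) * ((1 + x / (N - x)) * exp (-(x / (N - x)))) := by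
        field_simp; ring
    _ ≤ N - x := mul_le_of_le_one_right hNx.le hexp

lemma pow_mul_exp_neg_le_descFactorial {N k : ℕ} (hkN : k ≤ N) :
    (N : ℝ) ^ k * exp (-(k * (k - 1) / 2 / (N - k + 1))) ≤ N.descFactorial k := by
  induction k with
  | zero => simp
  | succ k ih =>
    have hk : (k : ℝ) < N := by exact_mod_cast hkN
    have hNk : (0 : ℝ) < N - k := sub_pos.mpr hk
    have hstep : (k : ℝ) * (k - 1) / 2 / (N - k + 1) + k / (N - k) ≤
        (k + 1 : ℕ) * ((k + 1 : ℕ) - 1) / 2 / (N - (k + 1 : ℕ) + 1) := by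
      have hk0 : (0 : ℝ) ≤ k * (k - 1) / 2 := by
        rw [← Nat.cast_choose_two]
        positivity
      calc (k : ℝ) * (k - 1) / 2 / (N - k + 1) + k / (N - k)
          ≤ k * (k - 1) / 2 / (N - k) + k / (N - k) := by gcongr; linarith
        _ = (k + 1 : ℕ) * ((k + 1 : ℕ) - 1) / 2 / (N - (k + 1 : ℕ) + 1) := by
          rw [show (N : ℝ) - (k + 1 : ℕ) + 1 = N - k by push_cast; ring]
          push_cast; field_simp; ring
    calc (N : ℝ) ^ (k + 1) * exp (-((k + 1 : ℕ) * ((k + 1 : ℕ) - 1) / 2 / (N - (k + 1 : ℕ) + 1)))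
        ≤ (N : ℝ) ^ (k + 1) * exp (-(k * (k - 1) / 2 / (N - k + 1) + k / (N - k))) := by
          gcongr
      _ = (N * exp (-(k / (N - k)))) * ((N : ℝ) ^ k * exp (-(k * (k - 1) / 2 / (N - k + 1)))) := by
          rw [neg_add, exp_add]; ring
      _ ≤ (N - k) * N.descFactorial k :=
          mul_le_mul (mul_exp_neg_div_sub_le hk) (ih (by omega)) (by positivity) hNk.le
      _ = N.descFactorial (k + 1) := by
          rw [descFactorial_succ, Nat.cast_mul, Nat.cast_sub (by omega)]

lemma exp_neg_two_div_sqrt_mul_le_choose {N k : ℕ} (hk : k ≠ 0) (hkN : k ≤ N)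
    (hsum : (k : ℝ) * (k - 1) / 2 ≤ N - k + 1) :
    exp (-2) / √k * (exp 1 * N / k) ^ k ≤ N.choose k := by
  have hk0 : (0 : ℝ) < k := by positivity
  have hkN' : (k : ℝ) ≤ N := by exact_mod_cast hkN
  have hdesc : (N : ℝ) ^ k * exp (-1) ≤ k ! * N.choose k := by
    have hexp : exp (-1) ≤ exp (-(k * (k - 1) / 2 / (N - k + 1))) :=
      exp_le_exp.mpr (neg_le_neg (div_le_one_of_le₀ hsum (by linarith)))
    rw [← Nat.cast_mul, ← descFactorial_eq_factorial_mul_choose]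
    exact (mul_le_mul_of_nonneg_left hexp (by positivity)).trans
      (pow_mul_exp_neg_le_descFactorial hkN)
  calc exp (-2) / √k * (exp 1 * N / k) ^ k
      = (N : ℝ) ^ k * exp (-1) / (exp 1 * √k * (k / exp 1) ^ k) := by
        rw [show exp (-2) = exp (-1) / exp 1 by rw [← exp_sub]; norm_num, div_pow, mul_pow,
          div_pow]
        field_simp
    _ ≤ N.choose k := by
      rw [div_le_iff₀ (by positivity)]
      calc (N : ℝ) ^ k * exp (-1) ≤ k ! * N.choose k := hdesc
        _ ≤ exp 1 * √k * (k / exp 1) ^ k * N.choose k := by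
          gcongr; exact factorial_le_exp_one_mul_sqrt_mul_pow hk
        _ = _ := mul_comm _ _

lemma exp_one_mul_sq_div_pow_le {n k : ℕ} (hn : 2 ≤ n) (hkn : k < n) :
    (exp 1 * n ^ 2 / (2 * k)) ^ k ≤ exp 1 * (exp 1 * n.choose 2 / k) ^ k := by
  have hn1 : (0 : ℝ) < n - 1 := by
    have : (2 : ℝ) ≤ n := by exact_mod_cast hn
    linarith
  have hbase : exp 1 * n ^ 2 / (2 * k) = (1 + ((n - 1 : ℕ) : ℝ)⁻¹) * (exp 1 * n.choose 2 / k) := by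
    rw [Nat.cast_choose_two, Nat.cast_pred (by omega)]
    field_simp
    ring
  rw [hbase, mul_pow]
  gcongr
  exact (pow_le_pow_right₀ (by simp) (by omega)).trans one_add_inv_pow_le_exp

lemma exp_one_mul_sqrt_le_two_mul_sqrt {n k : ℝ} (hn : 3 ≤ n) (hk : 0 ≤ k) (hkn : k + 1 ≤ n) :
    exp 1 * √k ≤ 2 * √(n * (n - 1)) := by
  rw [show (2 : ℝ) * √(n * (n - 1)) = √(4 * (n * (n - 1))) by
      rw [sqrt_mul zero_le_four, show (4 : ℝ) = 2 ^ 2 by norm_num, sqrt_sq zero_le_two],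
    le_sqrt (by positivity) (by nlinarith), mul_pow, sq_sqrt hk]
  have he : exp 1 ^ 2 ≤ 9 := by nlinarith [exp_one_lt_d9, exp_pos 1]
  nlinarith

theorem stmt_12 (n j : ℕ) (hn : 3 ≤ n) (hj1 : 1 ≤ j) (hj2 : j ≤ n - 2) :
    Real.exp (-2) / (2 * Real.sqrt ((n : ℝ) * ((n : ℝ) - 1))) *
        ((n : ℝ) ^ (1 - (j : ℝ) / n) * kappa ((j : ℝ) / n)) ^ n ≤
      ((Nat.choose n 2).choose (n - j) : ℝ) ∧
    ((Nat.choose n 2).choose (n - j) : ℝ) ≤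
      ((n : ℝ) ^ (1 - (j : ℝ) / n) * kappa ((j : ℝ) / n)) ^ n := by
  rw [kappa_pow_eq (by omega)]
  generalize hk : n - j = k
  set N := n.choose 2
  have hkn : (k : ℝ) + 1 ≤ n := by exact_mod_cast (by omega : k + 1 ≤ n)
  have hk0 : (0 : ℝ) < k := by exact_mod_cast (by omega : 0 < k)
  have hn3 : (3 : ℝ) ≤ n := by exact_mod_cast hn
  have hN : (N : ℝ) = n * (n - 1) / 2 := Nat.cast_choose_two ℝ n
  have hs : 0 < √(n * (n - 1)) := sqrt_pos.mpr (by nlinarith)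
  constructor
  · calc exp (-2) / (2 * √(n * (n - 1))) * (exp 1 * n ^ 2 / (2 * k)) ^ k
        ≤ exp (-2) / (2 * √(n * (n - 1))) * (exp 1 * (exp 1 * N / k) ^ k) := by
          gcongr; exact exp_one_mul_sq_div_pow_le (by omega) (by omega)
      _ ≤ exp (-2) / √k * (exp 1 * N / k) ^ k := by
          rw [← mul_assoc, div_mul_eq_mul_div]
          gcongr ?_ * _
          rw [div_le_div_iff₀ (by positivity) (by positivity), mul_assoc]
          exact mul_le_mul_of_nonneg_left
            (exp_one_mul_sqrt_le_two_mul_sqrt hn3 k.cast_nonneg hkn) (exp_pos _).le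
      _ ≤ N.choose k := exp_neg_two_div_sqrt_mul_le_choose (by omega)
            (by exact_mod_cast (show (k : ℝ) ≤ N by rw [hN]; nlinarith)) (by rw [hN]; nlinarith)
  · calc (N.choose k : ℝ) ≤ (exp 1 * N / k) ^ k := choose_le_exp_one_mul_div_pow N k
      _ ≤ (exp 1 * (n ^ 2 / 2) / k) ^ k := by gcongr; rw [hN]; nlinarith
      _ = (exp 1 * n ^ 2 / (2 * k)) ^ k := by ring
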